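/- arXiv:1803.02911 — 2 statements merged into one kernel-verified Lean document; each statement's English description precedes it below -/
import Mathlib

section
/- The section functor Γ : MBB(X) → NMod_pr(X) is faithful: if φ, ψ are MBB morphisms from T_1 to T_2 inducing equal module morphisms Γ(φ) = Γ(ψ) : Γ(T_1) → Γ(T_2), then φ = ψ (i.e. their representatives agree fiberwise m-a.e.). -/
/-!
Applying `φ` to the section that is constantly `q` on `E¹_n` gives the section `x ↦ φ_x q`,
so the hypothesis yields `φ_x q = ψ_x q` for a.e. `x`, one null set for each `q`. Taking
for `q` the `n` standard basis vectors leaves finitely many null sets, and off them `φ_x`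
and `ψ_x` are linear maps agreeing on a basis.
-/

open MeasureTheory Filter

namespace L0SerreSwan

/-- A measurable Banach bundle over `(X,d,m)`: a Borel partition `(E_n)_{n∈ℕ}` of `X`,
with total space `⊔ₙ Eₙ × ℝⁿ`, together with a measurable function `nrm` assigning to
`m`-a.e. point `x ∈ E_n` a norm `nrm n x ·` on the fiber `ℝⁿ`. -/
structure MBB (X : Type*) [MeasurableSpace X] (μ : MeasureTheory.Measure X) where
  E : ℕ → Set X
  measE : ∀ n, MeasurableSet (E n)
  disjE : ∀ n m, n ≠ m → Disjoint (E n) (E m)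
  unionE : (⋃ n, E n) = Set.univ
  nrm : (n : ℕ) → X → (Fin n → ℝ) → ℝ
  meas_nrm : ∀ n, Measurable (fun p : X × (Fin n → ℝ) => nrm n p.1 p.2)
  nrm_nonneg : ∀ n, ∀ᵐ x ∂μ, x ∈ E n → ∀ v, 0 ≤ nrm n x v
  nrm_definite : ∀ n, ∀ᵐ x ∂μ, x ∈ E n → ∀ v, nrm n x v = 0 → v = 0
  nrm_smul : ∀ n, ∀ᵐ x ∂μ, x ∈ E n → ∀ (c : ℝ) (v), nrm n x (c • v) = |c| * nrm n x v
  nrm_triangle : ∀ n, ∀ᵐ x ∂μ, x ∈ E n → ∀ v w, nrm n x (v + w) ≤ nrm n x v + nrm n x w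

variable {X : Type*} [MeasurableSpace X] {μ : MeasureTheory.Measure X}

/-- A measurable section of a measurable Banach bundle, recorded by its values
`val n x ∈ ℝⁿ` (only the values for `x ∈ E_n` are relevant). -/
structure Sec (B : MBB X μ) where
  val : (n : ℕ) → X → Fin n → ℝ
  meas : ∀ n, Measurable (val n)

/-- Two sections agree `m`-a.e. (fiberwise, on each piece of the partition). -/
def Sec.aeeq (B : MBB X μ) (s t : Sec B) : Prop :=
  ∀ n, ∀ᵐ x ∂μ, x ∈ B.E n → s.val n x = t.val n x

/-- Pointwise sum of sections. -/
def Sec.add {B : MBB X μ} (s t : Sec B) : Sec B :=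
  ⟨fun n x i => s.val n x i + t.val n x i, fun n =>
    measurable_pi_lambda _ fun i =>
      ((measurable_pi_apply i).comp (s.meas n)).add
        ((measurable_pi_apply i).comp (t.meas n))⟩

/-- Pointwise difference of sections. -/
def Sec.sub {B : MBB X μ} (s t : Sec B) : Sec B :=
  ⟨fun n x i => s.val n x i - t.val n x i, fun n =>
    measurable_pi_lambda _ fun i =>
      ((measurable_pi_apply i).comp (s.meas n)).sub
        ((measurable_pi_apply i).comp (t.meas n))⟩

/-- Multiplication of a section by a (Borel representative of an) `L⁰` function. -/
def Sec.smul {B : MBB X μ} (g : X → ℝ) (hg : Measurable g) (s : Sec B) : Sec B :=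
  ⟨fun n x i => g x * s.val n x i, fun n =>
    measurable_pi_lambda _ fun i =>
      hg.mul ((measurable_pi_apply i).comp (s.meas n))⟩

/-- The pointwise norm `|s|(x) = nrm(s(x))` of a section. -/
noncomputable def ptNorm (B : MBB X μ) (s : Sec B) : X → ℝ :=
  fun x => ∑' n, (B.E n).indicator (fun y => B.nrm n y (s.val n y)) x

/-- The distance `d(s,t) = ∫ |s-t| ∧ 1 dm'` on sections. -/
noncomputable def secDist (B : MBB X μ) (m' : MeasureTheory.Measure X) (s t : Sec B) : ℝ :=
  ∫ x, min (ptNorm B (s.sub t) x) 1 ∂m'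

/-- The constant section associated to a vector `q ∈ ℝⁿ`: it equals `q` on `E_n` and
vanishes on the other pieces of the partition. -/
def constSec (B : MBB X μ) (n : ℕ) (q : Fin n → ℝ) : Sec B :=
  ⟨fun k _x i => if h : k = n then q (Fin.cast h i) else 0,
   fun _k => measurable_const⟩

/-- A finite `L⁰`-linear combination `∑ᵢ gᵢ • uᵢ` of sections. -/
def lincomb {B : MBB X μ} {k : ℕ} (g : Fin k → X → ℝ) (hg : ∀ i, Measurable (g i))
    (u : Fin k → Sec B) : Sec B :=
  ⟨fun n x j => ∑ i, g i x * (u i).val n x j, fun n =>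
    measurable_pi_lambda _ fun j =>
      Finset.measurable_sum _ fun i _ =>
        (hg i).mul ((measurable_pi_apply j).comp ((u i).meas n))⟩

/-- A (pre-)morphism of measurable Banach bundles: a measurable map over `X` which, for
`m`-a.e. `x ∈ E¹_n ∩ E²_m`, is linear and 1-Lipschitz from the fiber of `T₁` to the
fiber of `T₂` at `x`. -/
structure MBBHom (B₁ B₂ : MBB X μ) where
  toFun : (n m : ℕ) → X → (Fin n → ℝ) → (Fin m → ℝ)
  meas : ∀ n m, Measurable (fun p : X × (Fin n → ℝ) => toFun n m p.1 p.2)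
  ae_add : ∀ n m, ∀ᵐ x ∂μ, x ∈ B₁.E n ∩ B₂.E m →
    ∀ v w, toFun n m x (v + w) = toFun n m x v + toFun n m x w
  ae_smul : ∀ n m, ∀ᵐ x ∂μ, x ∈ B₁.E n ∩ B₂.E m →
    ∀ (c : ℝ) (v), toFun n m x (c • v) = c • toFun n m x v
  ae_lipschitz : ∀ n m, ∀ᵐ x ∂μ, x ∈ B₁.E n ∩ B₂.E m →
    ∀ v, B₂.nrm m x (toFun n m x v) ≤ B₁.nrm n x v

/-- `t` represents the composition `φ ∘ s` (that is, `t` is a measurable section of `T₂`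
which `m`-a.e. equals `φ` applied fiberwise to the section `s` of `T₁`). -/
def Represents {B₁ B₂ : MBB X μ} (φ : MBBHom B₁ B₂) (s : Sec B₁) (t : Sec B₂) : Prop :=
  ∀ n m, ∀ᵐ x ∂μ, x ∈ B₁.E n ∩ B₂.E m → t.val m x = φ.toFun n m x (s.val n x)

theorem _root_.IsLinearMap.eq_of_eq_on_single {R ι M : Type*} [CommSemiring R] [Finite ι]
    [DecidableEq ι] [AddCommMonoid M] [Module R M] {f g : (ι → R) → M}
    (hf : IsLinearMap R f) (hg : IsLinearMap R g)
    (h : ∀ i, f (Pi.single i 1) = g (Pi.single i 1)) : f = g := by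
  have := (Pi.basisFun R ι).ext (f₁ := IsLinearMap.mk' f hf) (f₂ := IsLinearMap.mk' g hg)
    (by simpa using h)
  exact congrArg DFunLike.coe this

theorem constSec_val_self (B : MBB X μ) (n : ℕ) (q : Fin n → ℝ) (x : X) :
    (constSec B n q).val n x = q := by
  funext i
  simp [constSec]

theorem constSec_val_of_ne (B : MBB X μ) {n k : ℕ} (hk : k ≠ n) (q : Fin n → ℝ) (x : X) :
    (constSec B n q).val k x = 0 := by
  funext i
  simp [constSec, hk]

namespace MBBHom

variable {B₁ B₂ : MBB X μ}

theorem ae_isLinearMap (φ : MBBHom B₁ B₂) (n m : ℕ) :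
    ∀ᵐ x ∂μ, x ∈ B₁.E n ∩ B₂.E m → IsLinearMap ℝ (φ.toFun n m x) := by
  filter_upwards [φ.ae_add n m, φ.ae_smul n m] with x hadd hsmul hx
  exact ⟨hadd hx, hsmul hx⟩

noncomputable def mapConstSec (φ : MBBHom B₁ B₂) (n : ℕ) (q : Fin n → ℝ) : Sec B₂ :=
  ⟨fun m x => (B₁.E n).indicator (fun y => φ.toFun n m y q) x,
   fun m => ((φ.meas n m).comp (measurable_id.prodMk measurable_const)).indicator
     (B₁.measE n)⟩

theorem mapConstSec_val_of_mem (φ : MBBHom B₁ B₂) {n : ℕ} (q : Fin n → ℝ) (m : ℕ) {x : X}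
    (hx : x ∈ B₁.E n) : (φ.mapConstSec n q).val m x = φ.toFun n m x q :=
  Set.indicator_of_mem (f := fun y => φ.toFun n m y q) hx

theorem represents_mapConstSec (φ : MBBHom B₁ B₂) (n : ℕ) (q : Fin n → ℝ) :
    Represents φ (constSec B₁ n q) (φ.mapConstSec n q) := by
  intro k m
  by_cases hk : k = n
  · subst hk
    refine .of_forall fun x hx => ?_
    rw [constSec_val_self, mapConstSec_val_of_mem φ q m hx.1]
  · filter_upwards [φ.ae_isLinearMap k m] with x hlin hx
    have hx_notMem : x ∉ B₁.E n := fun hxn => (B₁.disjE k n hk).le_bot ⟨hx.1, hxn⟩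
    rw [constSec_val_of_ne B₁ hk, (hlin hx).map_zero]
    exact Set.indicator_of_notMem (f := fun y => φ.toFun n m y q) hx_notMem

end MBBHom

theorem section_functor_faithful_general
    {X : Type*} [MeasurableSpace X] (μ : Measure X)
    (B₁ B₂ : MBB X μ) (φ ψ : MBBHom B₁ B₂)
    (h : ∀ (s : Sec B₁) (t u : Sec B₂),
      Represents φ s t → Represents ψ s u → Sec.aeeq B₂ t u) :
    ∀ n m, ∀ᵐ x ∂μ, x ∈ B₁.E n ∩ B₂.E m →
      ∀ v, φ.toFun n m x v = ψ.toFun n m x v := by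
  intro n m
  have h_const : ∀ q : Fin n → ℝ, ∀ᵐ x ∂μ, x ∈ B₁.E n ∩ B₂.E m →
      φ.toFun n m x q = ψ.toFun n m x q := fun q => by
    filter_upwards [h _ _ _ (φ.represents_mapConstSec n q) (ψ.represents_mapConstSec n q) m]
      with x hx hmem
    rw [← φ.mapConstSec_val_of_mem q m hmem.1, ← ψ.mapConstSec_val_of_mem q m hmem.1]
    exact hx hmem.2
  have h_basis := ae_all_iff.2 fun i : Fin n => h_const (Pi.single i 1)
  filter_upwards [h_basis, φ.ae_isLinearMap n m, ψ.ae_isLinearMap n m]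
    with x hx hφ hψ hmem
  exact congrFun ((hφ hmem).eq_of_eq_on_single (hψ hmem) fun i => hx i hmem)

/-- **The section functor is faithful.** If two morphisms `φ, ψ` of measurable Banach
bundles over a metric measure space `(X,d,m)` induce equal module morphisms on sections
(i.e. for every section `s`, any representatives of `φ ∘ s` and `ψ ∘ s` agree `m`-a.e.),
then `φ = ψ`, i.e. they agree fiberwise at `m`-a.e. base point. -/
theorem section_functor_faithful
    {X : Type*} [MetricSpace X] [CompleteSpace X] [SecondCountableTopology X]
    [MeasurableSpace X] [BorelSpace X]
    (μ : Measure X) [IsLocallyFiniteMeasure μ] (hμ : μ ≠ 0)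
    (B₁ B₂ : MBB X μ) (φ ψ : MBBHom B₁ B₂)
    (h : ∀ (s : Sec B₁) (t u : Sec B₂),
      Represents φ s t → Represents ψ s u → Sec.aeeq B₂ t u) :
    ∀ n m, ∀ᵐ x ∂μ, x ∈ B₁.E n ∩ B₂.E m →
      ∀ v, φ.toFun n m x v = ψ.toFun n m x v :=
  section_functor_faithful_general μ B₁ B₂ φ ψ h

end L0SerreSwan
end

section
/- Let f : X → Y be a Borel map of bounded compression (f_*m_X ≤ C m_Y). For any measurable Banach bundle T over Y, the pullback of the section module equals the section module of the pullback bundle: f*Γ(T) = Γ(f*T), where f*T has partition (f^{-1}(E_n)) and fiber norm n'(x,v) = n(f(x),v). Concretely, the map s ↦ s∘f (as a section of f*T) is linear, satisfies |f*s| = |s|∘f, and its image generates Γ(f*T) as an L^0(m_X)-normed module. -/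
open MeasureTheory Filter
open scoped ENNReal

namespace L0SerreSwan

/-- The pullback `f*s` of a section `s` of a bundle over `Y` along `f : X → Y`, viewed
as a section of a bundle `B'` over `X` (intended: `B' = f*B`). -/
def pullSec {X Y : Type*} [MeasurableSpace X] [MeasurableSpace Y]
    {μX : Measure X} {μY : Measure Y} {B : MBB Y μY} (B' : MBB X μX)
    (f : X → Y) (hf : Measurable f) (s : Sec B) : Sec B' :=
  ⟨fun n x => s.val n (f x), fun n => (s.meas n).comp hf⟩


/-!
The pointwise-norm identity holds everywhere, because the pieces and the norms of `f*T` are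
those of `T` read through `f`. For generation, pullbacks of constant sections are constant
sections of `f*T`, and the standard basis vectors of `ℝⁿ` on the pieces `E_n` with `n < N`
expand any section `t` exactly on `E_0 ∪ ⋯ ∪ E_{N-1}`. Since the truncated distance is at most
`1`, the error is bounded by the `m'`-measure of the tail `⋃_{n ≥ N} E_n`, which tends to `0`.
-/

section Bundle

variable {X : Type*} [MeasurableSpace X] {μ : Measure X} (B : MBB X μ)

theorem MBB.exists_mem_E (x : X) : ∃ n, x ∈ B.E n :=
  Set.mem_iUnion.mp (B.unionE ▸ Set.mem_univ x)

theorem MBB.notMem_E_of_mem {x : X} {m n : ℕ} (hm : x ∈ B.E m) (hnm : n ≠ m) : x ∉ B.E n :=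
  fun hn => Set.disjoint_left.mp (B.disjE n m hnm) hn hm

theorem ptNorm_eq_of_mem (u : Sec B) {m : ℕ} {x : X} (hx : x ∈ B.E m) :
    ptNorm B u x = B.nrm m x (u.val m x) := by
  rw [ptNorm, tsum_eq_single m fun n hn => Set.indicator_of_notMem (B.notMem_E_of_mem hx hn) _,
    Set.indicator_of_mem hx]

theorem ae_ptNorm_nonneg (u : Sec B) : ∀ᵐ x ∂μ, 0 ≤ ptNorm B u x := by
  filter_upwards [ae_all_iff.mpr B.nrm_nonneg] with x hx
  obtain ⟨m, hm⟩ := B.exists_mem_E x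
  rw [ptNorm_eq_of_mem B u hm]
  exact hx m hm _

theorem ae_ptNorm_eq_zero (u : Sec B) :
    ∀ᵐ x ∂μ, ∀ m, x ∈ B.E m → u.val m x = 0 → ptNorm B u x = 0 := by
  filter_upwards [ae_all_iff.mpr B.nrm_smul] with x hx m hm hu
  rw [ptNorm_eq_of_mem B u hm, hu]
  simpa using hx m hm 0 0

def tailE (N : ℕ) : Set X := ⋃ n ≥ N, B.E n

theorem measurableSet_tailE (N : ℕ) : MeasurableSet (tailE B N) :=
  .biUnion (Set.to_countable _) fun n _ => B.measE n

theorem notMem_tailE {x : X} {m N : ℕ} (hm : x ∈ B.E m) (hmN : m < N) : x ∉ tailE B N := by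
  simp only [tailE, Set.mem_iUnion, not_exists]
  intro n hn
  exact B.notMem_E_of_mem hm (by omega)

theorem tendsto_measure_tailE (ν : Measure X) [IsFiniteMeasure ν] :
    Tendsto (fun N => ν (tailE B N)) atTop (nhds 0) := by
  have hanti : Antitone (tailE B) := fun N M hNM =>
    Set.biUnion_subset_biUnion_left fun n (hn : M ≤ n) => hNM.trans hn
  have hempty : ⋂ N, tailE B N = ∅ :=
    Set.eq_empty_of_forall_notMem fun x hx =>
      have ⟨m, hm⟩ := B.exists_mem_E x
      notMem_tailE B hm m.lt_succ_self (Set.mem_iInter.mp hx (m + 1))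
  have := tendsto_measure_iInter_atTop
    (fun N => (measurableSet_tailE B N).nullMeasurableSet) hanti ⟨0, measure_ne_top ν _⟩
  rwa [hempty, measure_empty] at this

theorem secDist_le_measureReal_tailE {m' : Measure X} [IsFiniteMeasure m'] (hm' : m' ≪ μ)
    {s t : Sec B} {N : ℕ} (hst : ∀ m < N, ∀ x, s.val m x = t.val m x) :
    secDist B m' s t ≤ m'.real (tailE B N) := by
  rw [secDist, ← integral_indicator_one (measurableSet_tailE B N)]
  refine integral_mono_of_nonneg ?_ ((integrable_const 1).indicator (measurableSet_tailE B N)) ?_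
  · filter_upwards [hm'.ae_le (ae_ptNorm_nonneg B (s.sub t))] with x hx
    exact le_min hx zero_le_one
  · filter_upwards [hm'.ae_le (ae_ptNorm_eq_zero B (s.sub t))] with x hx
    obtain ⟨m, hm⟩ := B.exists_mem_E x
    by_cases hmN : m < N
    · have hzero : (s.sub t).val m x = 0 := by
        funext i
        exact sub_eq_zero.mpr (congrFun (hst m hmN x) i)
      simp [Set.indicator_of_notMem (notMem_tailE B hm hmN), hx m hm hzero]
    · rw [Set.indicator_of_mem (show x ∈ tailE B N from Set.mem_biUnion (not_lt.mp hmN) hm)]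
      exact min_le_right _ _

theorem exists_lincomb_constSec_eq_of_lt (t : Sec B) (N : ℕ) :
    ∃ (k : ℕ) (g : Fin k → X → ℝ) (hg : ∀ i, Measurable (g i)) (n : Fin k → ℕ)
      (q : ∀ i, Fin (n i) → ℝ),
      ∀ m < N, ∀ x, (lincomb g hg fun i => constSec B (n i) (q i)).val m x = t.val m x := by
  let e := Fintype.equivFin ((n : Fin N) × Fin (n : ℕ))
  refine ⟨_, fun i x => t.val (e.symm i).1 x (e.symm i).2,
    fun i => (measurable_pi_apply _).comp (t.meas _), fun i => (e.symm i).1,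
    fun i => Pi.single (e.symm i).2 1, fun m hm x => funext fun j => ?_⟩
  dsimp only [lincomb, constSec]
  rw [e.symm.sum_comp (fun a => t.val a.1 x a.2 *
      if h : m = a.1 then Pi.single (M := fun _ => ℝ) a.2 1 (Fin.cast h j) else 0),
    ← Finset.univ_sigma_univ, Finset.sum_sigma,
    Finset.sum_eq_single_of_mem ⟨m, hm⟩ (Finset.mem_univ _)]
  · simp [Pi.single_apply]
  · intro b _ hb
    simp [show m ≠ b from fun h => hb (Fin.ext h.symm)]

theorem exists_lincomb_constSec_secDist_lt {m' : Measure X} [IsFiniteMeasure m']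
    (hm' : m' ≪ μ) (t : Sec B) {ε : ℝ} (hε : 0 < ε) :
    ∃ (k : ℕ) (g : Fin k → X → ℝ) (hg : ∀ i, Measurable (g i)) (n : Fin k → ℕ)
      (q : ∀ i, Fin (n i) → ℝ),
      secDist B m' t (lincomb g hg fun i => constSec B (n i) (q i)) < ε := by
  obtain ⟨N, hN⟩ := ((tendsto_measure_tailE B m').eventually
    (gt_mem_nhds (ENNReal.ofReal_pos.mpr hε))).exists
  obtain ⟨k, g, hg, n, q, hexp⟩ := exists_lincomb_constSec_eq_of_lt B t N
  have hdist := secDist_le_measureReal_tailE B hm' fun m hm x => (hexp m hm x).symm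
  exact ⟨k, g, hg, n, q, hdist.trans_lt (ENNReal.toReal_lt_of_lt_ofReal hN)⟩

end Bundle

theorem ptNorm_pullSec {X Y : Type*} [MeasurableSpace X] [MeasurableSpace Y]
    {μX : Measure X} {μY : Measure Y} {B : MBB Y μY} {B' : MBB X μX}
    {f : X → Y} (hf : Measurable f) (hE : ∀ n, B'.E n = f ⁻¹' (B.E n))
    (hn : ∀ n (x : X) (v : Fin n → ℝ), B'.nrm n x v = B.nrm n (f x) v) (s : Sec B) (x : X) :
    ptNorm B' (pullSec B' f hf s) x = ptNorm B s (f x) := by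
  refine tsum_congr fun n => ?_
  simp only [pullSec, hE, hn]
  exact Set.indicator_comp_right (g := fun y => B.nrm n y (s.val n y)) f

theorem pullback_sections_general
    {X Y : Type*}
    [MeasurableSpace X]
    [MeasurableSpace Y]
    (μX : Measure X)
    (μY : Measure Y)
    (m' : Measure X) [IsProbabilityMeasure m'] (h₂ : m' ≪ μX)
    (f : X → Y) (hf : Measurable f)
    (B : MBB Y μY) (B' : MBB X μX)
    (hE : ∀ n, B'.E n = f ⁻¹' (B.E n))
    (hn : ∀ n (x : X) (v : Fin n → ℝ), B'.nrm n x v = B.nrm n (f x) v) :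
    -- `f*` is linear
    (∀ s t : Sec B,
      Sec.aeeq B' (pullSec B' f hf (Sec.add s t))
        (Sec.add (pullSec B' f hf s) (pullSec B' f hf t))) ∧
    (∀ (g : Y → ℝ) (hg : Measurable g) (s : Sec B),
      Sec.aeeq B' (pullSec B' f hf (Sec.smul g hg s))
        (Sec.smul (g ∘ f) (hg.comp hf) (pullSec B' f hf s))) ∧
    -- `f*` preserves the pointwise norm: `|f*s| = |s| ∘ f`
    (∀ s : Sec B,
      (fun x => ptNorm B' (pullSec B' f hf s) x) =ᵐ[μX] fun x => ptNorm B s (f x)) ∧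
    -- the image of `f*` generates `Γ(f*T)`
    (∀ (t : Sec B') (ε : ℝ), 0 < ε →
      ∃ (k : ℕ) (g : Fin k → X → ℝ) (hg : ∀ i, Measurable (g i)) (s : Fin k → Sec B),
        secDist B' m' t (lincomb g hg fun i => pullSec B' f hf (s i)) < ε) := by
  refine ⟨fun s t n => .of_forall fun x _ => rfl, fun g hg s n => .of_forall fun x _ => rfl,
    fun s => .of_forall (ptNorm_pullSec hf hE hn s), fun t ε hε => ?_⟩
  obtain ⟨k, g, hg, n, q, hlt⟩ := exists_lincomb_constSec_secDist_lt B' h₂ t hε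
  -- the pullback of a constant section of `T` is the constant section of `f*T`, definitionally
  exact ⟨k, g, hg, fun i => constSec B (n i) (q i), hlt⟩

/-- **Pullback of section modules.** Let `f : X → Y` be a Borel map of bounded
compression (`f_* m_X ≤ C m_Y`) between metric measure spaces, `T` a measurable Banach
bundle over `Y` and `f*T` the pullback bundle over `X` (partition `f⁻¹(E_n)`, fiber norm
`n'(x,·) = n(f(x),·)`). Then `f*Γ(T) = Γ(f*T)`: the map `s ↦ s ∘ f` is linear, satisfies
`|f*s| = |s| ∘ f` `m_X`-a.e., and its image generates `Γ(f*T)` (finite `L⁰(m_X)`-linear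
combinations of pullbacks are dense). -/
theorem pullback_sections
    {X Y : Type*} [MetricSpace X] [CompleteSpace X] [SecondCountableTopology X]
    [MeasurableSpace X] [BorelSpace X]
    [MetricSpace Y] [CompleteSpace Y] [SecondCountableTopology Y]
    [MeasurableSpace Y] [BorelSpace Y]
    (μX : Measure X) [IsLocallyFiniteMeasure μX] (hμX : μX ≠ 0)
    (μY : Measure Y) [IsLocallyFiniteMeasure μY] (hμY : μY ≠ 0)
    (m' : Measure X) [IsProbabilityMeasure m'] (h₁ : μX ≪ m') (h₂ : m' ≪ μX)
    (f : X → Y) (hf : Measurable f) (C : ℝ≥0∞) (hC : C ≠ 0)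
    (hcomp : Measure.map f μX ≤ C • μY)
    (B : MBB Y μY) (B' : MBB X μX)
    (hE : ∀ n, B'.E n = f ⁻¹' (B.E n))
    (hn : ∀ n (x : X) (v : Fin n → ℝ), B'.nrm n x v = B.nrm n (f x) v) :
    -- `f*` is linear
    (∀ s t : Sec B,
      Sec.aeeq B' (pullSec B' f hf (Sec.add s t))
        (Sec.add (pullSec B' f hf s) (pullSec B' f hf t))) ∧
    (∀ (g : Y → ℝ) (hg : Measurable g) (s : Sec B),
      Sec.aeeq B' (pullSec B' f hf (Sec.smul g hg s))
        (Sec.smul (g ∘ f) (hg.comp hf) (pullSec B' f hf s))) ∧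
    -- `f*` preserves the pointwise norm: `|f*s| = |s| ∘ f`
    (∀ s : Sec B,
      (fun x => ptNorm B' (pullSec B' f hf s) x) =ᵐ[μX] fun x => ptNorm B s (f x)) ∧
    -- the image of `f*` generates `Γ(f*T)`
    (∀ (t : Sec B') (ε : ℝ), 0 < ε →
      ∃ (k : ℕ) (g : Fin k → X → ℝ) (hg : ∀ i, Measurable (g i)) (s : Fin k → Sec B),
        secDist B' m' t (lincomb g hg fun i => pullSec B' f hf (s i)) < ε) :=
  pullback_sections_general μX μY m' h₂ f hf B B' hE hn

end L0SerreSwan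
end
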